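/- arXiv:0705.0183 — 5 statements merged into one kernel-verified Lean document; each statement's English description precedes it below -/
import Mathlib

section
/- Let H be a subgroup of a countable discrete group G. The group von Neumann algebra L(H) has trivial relative commutant in L(G) (i.e., L(H)' ∩ L(G) = ℂ1) if and only if every element g ∈ G with g ≠ e has infinitely many H-conjugates {hgh⁻¹ : h ∈ H}. -/
/-!
Right translations `ρ_g` commute with the left regular representation, so every `T ∈ L(G)`
commutes with them and is determined by `f = T δ₁`, through `T δ_y = ρ_{y⁻¹} f`. If `T` also
commutes with `L(H)`, then `f` is constant on `H`-conjugacy classes; being square summable it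
vanishes on every infinite class, so when all nontrivial classes are infinite `f` is a multiple
of `δ₁` and `T` is a scalar. Conversely, a finite nontrivial class `C` yields the non-scalar
element `∑_{c ∈ C} λ_c` of `L(H)' ∩ L(G)`.
-/

open scoped ENNReal lp
open Filter

namespace lp

variable {ι κ E : Type*} [NormedAddCommGroup E] {p : ℝ≥0∞}

theorem eq_zero_of_infinite_setOf_eq (hp : 0 < p.toReal) (f : lp (fun _ : ι => E) p) {c : E}
    (hc : {i | f i = c}.Infinite) : c = 0 := by
  by_contra hc₀
  have hpos : 0 < ‖c‖ ^ p.toReal := Real.rpow_pos_of_pos (norm_pos_iff.2 hc₀) _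
  have hsmall := ((lp.memℓp f).summable hp).tendsto_cofinite_zero.eventually (gt_mem_nhds hpos)
  exact hc ((eventually_cofinite.1 hsmall).subset fun i (hi : f i = c) => by simp [hi])

variable (𝕜 : Type*) [NormedRing 𝕜] [Module 𝕜 E] [IsBoundedSMul 𝕜 E] [Fact (1 ≤ p)]

noncomputable def compEquiv (hp : p ≠ ∞) (e : ι ≃ κ) :
    lp (fun _ : κ => E) p →ₗᵢ[𝕜] lp (fun _ : ι => E) p :=
  have hp' : 0 < p.toReal :=
    ENNReal.toReal_pos (zero_lt_one.trans_le Fact.out).ne' hp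
  { toFun := fun f => ⟨f ∘ e, memℓp_gen <| e.summable_iff.2 <| (lp.memℓp f).summable hp'⟩
    map_add' := fun _ _ => rfl
    map_smul' := fun _ _ => rfl
    norm_map' := fun f => by
      rw [norm_eq_tsum_rpow hp', norm_eq_tsum_rpow hp']
      exact congrArg (· ^ (1 / p.toReal)) (e.tsum_eq fun i => ‖f i‖ ^ p.toReal) }

end lp

theorem MulHom.commute_sum_of_conj_invariant {G A : Type*} [Group G] [NonUnitalNonAssocSemiring A]
    (ρ : G →ₙ* A) {s : Finset G} {g : G} (hs : ∀ x, g * x * g⁻¹ ∈ s ↔ x ∈ s) :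
    Commute (ρ g) (∑ x ∈ s, ρ x) := by
  have hconj : ∑ x ∈ s, ρ (g * x * g⁻¹) = ∑ x ∈ s, ρ x :=
    Finset.sum_equiv (MulAut.conj g) (fun x => (hs x).symm) fun _ _ => rfl
  calc ρ g * ∑ x ∈ s, ρ x = ∑ x ∈ s, ρ (g * x * g⁻¹) * ρ g := by
        simp only [Finset.mul_sum, ← map_mul, inv_mul_cancel_right]
    _ = (∑ x ∈ s, ρ x) * ρ g := by rw [← Finset.sum_mul, hconj]

theorem Subgroup.mul_conj_mem_setOf_conj_iff {G : Type*} [Group G] (H : Subgroup G) {h : G}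
    (hh : h ∈ H) (g x : G) :
    h * x * h⁻¹ ∈ {y | ∃ k ∈ H, y = k * g * k⁻¹} ↔ x ∈ {y | ∃ k ∈ H, y = k * g * k⁻¹} := by
  constructor
  · rintro ⟨k, hk, hx⟩
    refine ⟨h⁻¹ * k, H.mul_mem (H.inv_mem hh) hk, ?_⟩
    calc x = h⁻¹ * (h * x * h⁻¹) * h := by group
      _ = h⁻¹ * k * g * (h⁻¹ * k)⁻¹ := by rw [hx]; group
  · rintro ⟨k, hk, rfl⟩
    exact ⟨h * k, H.mul_mem hh hk, by group⟩

section RegularRepresentation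

variable {G : Type*} [Group G]

noncomputable def rightRegular (g : G) : ℓ²(G, ℂ) →L[ℂ] ℓ²(G, ℂ) :=
  (lp.compEquiv (p := 2) ℂ ENNReal.ofNat_ne_top (Equiv.mulRight g)).toContinuousLinearMap

@[simp]
theorem rightRegular_apply (g : G) (f : ℓ²(G, ℂ)) (x : G) : rightRegular g f x = f (x * g) :=
  rfl

theorem rightRegular_single [DecidableEq G] (g y : G) (c : ℂ) :
    rightRegular g (lp.single 2 y c) = lp.single 2 (y * g⁻¹) c := by
  ext x
  simp [Pi.single_apply, eq_mul_inv_iff_mul_eq]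

def IsLeftRegularRep (lam : G → (ℓ²(G, ℂ) →L[ℂ] ℓ²(G, ℂ))) : Prop :=
  ∀ (g : G) (f : ℓ²(G, ℂ)) (x : G), lam g f x = f (g⁻¹ * x)

namespace IsLeftRegularRep

variable {lam : G → (ℓ²(G, ℂ) →L[ℂ] ℓ²(G, ℂ))}

theorem map_mul (hlam : IsLeftRegularRep lam) (a b : G) : lam a * lam b = lam (a * b) := by
  ext f x
  rw [mul_apply_eq_comp, hlam, hlam, hlam, mul_inv_rev, mul_assoc]

def toMulHom (hlam : IsLeftRegularRep lam) : G →ₙ* (ℓ²(G, ℂ) →L[ℂ] ℓ²(G, ℂ)) where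
  toFun := lam
  map_mul' a b := (hlam.map_mul a b).symm

theorem apply_single [DecidableEq G] (hlam : IsLeftRegularRep lam) (g y : G) (c : ℂ) :
    lam g (lp.single 2 y c) = lp.single 2 (g * y) c := by
  ext x
  simp [hlam g, Pi.single_apply, inv_mul_eq_iff_eq_mul]

theorem rightRegular_mem_centralizer (hlam : IsLeftRegularRep lam) (g : G) :
    rightRegular g ∈ Set.centralizer {S | ∃ g : G, S = lam g} := by
  rintro _ ⟨g', rfl⟩
  ext f x
  rw [mul_apply_eq_comp, mul_apply_eq_comp, hlam, rightRegular_apply,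
    rightRegular_apply, hlam, mul_assoc]

end IsLeftRegularRep

variable {T : ℓ²(G, ℂ) →L[ℂ] ℓ²(G, ℂ)}

theorem apply_single_of_commute_rightRegular [DecidableEq G]
    (hT : ∀ g, Commute T (rightRegular g)) (y : G) (c : ℂ) :
    T (lp.single 2 y c) = rightRegular y⁻¹ (T (lp.single 2 1 c)) := by
  rw [← mul_apply_eq_comp, ← (hT y⁻¹).eq, mul_apply_eq_comp, rightRegular_single, inv_inv, one_mul]

theorem eq_smul_one_of_commute_rightRegular [DecidableEq G]
    (hT : ∀ g, Commute T (rightRegular g)) {c : ℂ}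
    (hc : T (lp.single 2 1 1) = c • lp.single 2 1 1) : T = c • 1 := by
  refine lp.ext_continuousLinearMap ENNReal.ofNat_ne_top fun y => ContinuousLinearMap.ext_ring ?_
  change T (lp.single 2 y 1) = c • lp.single 2 y 1
  rw [apply_single_of_commute_rightRegular hT, hc, map_smul, rightRegular_single, one_mul, inv_inv]

theorem IsLeftRegularRep.apply_single_one_conj [DecidableEq G] (hlam : IsLeftRegularRep lam)
    (hT : ∀ g, Commute T (rightRegular g)) {h : G} (hTh : Commute T (lam h)) (z : G) :
    T (lp.single 2 1 1) (h * z * h⁻¹) = T (lp.single 2 1 1) z :=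
  calc T (lp.single 2 1 1) (h * z * h⁻¹) = T (lam h (lp.single 2 1 1)) (h * z) := by
        rw [hlam.apply_single, mul_one, apply_single_of_commute_rightRegular hT h,
          rightRegular_apply]
    _ = lam h (T (lp.single 2 1 1)) (h * z) := by
        rw [← mul_apply_eq_comp, hTh.eq, mul_apply_eq_comp]
    _ = T (lp.single 2 1 1) z := by rw [hlam, inv_mul_cancel_left]

theorem IsLeftRegularRep.mem_range_smul_one_of_infinite_conjugates (hlam : IsLeftRegularRep lam)
    {H : Subgroup G} (hinf : ∀ g : G, g ≠ 1 → {x : G | ∃ h ∈ H, x = h * g * h⁻¹}.Infinite)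
    (hTG : T ∈ Set.centralizer (Set.centralizer {S | ∃ g : G, S = lam g}))
    (hTH : T ∈ Set.centralizer {S | ∃ h ∈ H, S = lam h}) :
    T ∈ Set.range fun c : ℂ => c • (1 : ℓ²(G, ℂ) →L[ℂ] ℓ²(G, ℂ)) := by
  classical
  have hright (g : G) : Commute T (rightRegular g) :=
    (hTG _ (hlam.rightRegular_mem_centralizer g)).symm
  set f := T (lp.single 2 1 1)
  have hf_conj {h : G} (hh : h ∈ H) (z : G) : f (h * z * h⁻¹) = f z :=
    hlam.apply_single_one_conj hright (hTH (lam h) ⟨h, hh, rfl⟩).symm z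
  have hf_off_one (g : G) (hg : g ≠ 1) : f g = 0 :=
    lp.eq_zero_of_infinite_setOf_eq (by norm_num) f <|
      (hinf g hg).mono <| by rintro _ ⟨h, hh, rfl⟩; exact hf_conj hh g
  refine ⟨f 1, (eq_smul_one_of_commute_rightRegular hright ?_).symm⟩
  ext x
  rcases eq_or_ne x 1 with rfl | hx
  · simp [f]
  · simpa [hx] using hf_off_one x hx

theorem IsLeftRegularRep.exists_nonscalar_of_finite_conjugates (hlam : IsLeftRegularRep lam)
    {H : Subgroup G} {g : G} (hg : g ≠ 1) (hfin : {x : G | ∃ h ∈ H, x = h * g * h⁻¹}.Finite) :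
    ∃ T ∈ Set.centralizer (Set.centralizer {S | ∃ g : G, S = lam g}),
      T ∈ Set.centralizer {S | ∃ h ∈ H, S = lam h} ∧
      T ∉ Set.range fun c : ℂ => c • (1 : ℓ²(G, ℂ) →L[ℂ] ℓ²(G, ℂ)) := by
  classical
  refine ⟨∑ x ∈ hfin.toFinset, lam x, ?_, ?_, ?_⟩
  · exact (Subsemiring.centralizer _).sum_mem fun x _ =>
      Set.subset_centralizer_centralizer ⟨x, rfl⟩
  · rintro _ ⟨h, hh, rfl⟩
    refine (hlam.toMulHom.commute_sum_of_conj_invariant fun x => ?_).eq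
    simpa only [Set.Finite.mem_toFinset] using H.mul_conj_mem_setOf_conj_iff hh g x
  · rintro ⟨c, hc⟩
    have hg_mem : g ∈ hfin.toFinset := hfin.mem_toFinset.2 ⟨1, H.one_mem, by group⟩
    have := congrArg (fun S => S (lp.single 2 1 1) g) hc
    rw [sum_apply, lp.coeFn_sum, Finset.sum_apply] at this
    simp [hlam.apply_single, Pi.single_apply, hg, hg_mem] at this

end RegularRepresentation

theorem groupVonNeumannAlgebra_irreducible_iff_infinite_conjugates_general
    {G : Type*} [Group G] (H : Subgroup G)
    (lam : G → (lp (fun _ : G => ℂ) 2 →L[ℂ] lp (fun _ : G => ℂ) 2))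
    (hlam : ∀ (g : G) (f : lp (fun _ : G => ℂ) 2) (x : G),
      (lam g f : ∀ _ : G, ℂ) x = f (g⁻¹ * x)) :
    ({x | x ∈ Set.centralizer (Set.centralizer {T | ∃ g : G, T = lam g}) ∧
        x ∈ Set.centralizer
          (Set.centralizer (Set.centralizer {T | ∃ h ∈ H, T = lam h}))} =
      Set.range fun c : ℂ =>
        c • (1 : lp (fun _ : G => ℂ) 2 →L[ℂ] lp (fun _ : G => ℂ) 2)) ↔
    ∀ g : G, g ≠ 1 → {x : G | ∃ h ∈ H, x = h * g * h⁻¹}.Infinite := by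
  replace hlam : IsLeftRegularRep lam := hlam
  simp only [Set.centralizer_centralizer_centralizer]
  constructor
  · intro hscalar g hg hfin
    obtain ⟨T, hTG, hTH, hT⟩ := hlam.exists_nonscalar_of_finite_conjugates hg hfin
    exact hT (hscalar ▸ ⟨hTG, hTH⟩)
  · intro hinf
    refine Set.Subset.antisymm (fun T ⟨hTG, hTH⟩ => ?_) ?_
    · exact hlam.mem_range_smul_one_of_infinite_conjugates hinf hTG hTH
    · rintro _ ⟨c, rfl⟩
      simp only [Set.mem_ofPred_eq, ← Algebra.algebraMap_eq_smul_one]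
      exact ⟨Set.algebraMap_mem_centralizer c, Set.algebraMap_mem_centralizer c⟩

/-- Let `H` be a subgroup of a countable discrete group `G`, and let
`λ` be the left regular representation of `G` on `ℓ²(G)`.  The group von Neumann algebra
`L(H)` (the double commutant of `{λ_h : h ∈ H}`) has trivial relative commutant in
`L(G)` if and only if every `g ≠ 1` in `G` has infinitely many `H`-conjugates. -/
theorem groupVonNeumannAlgebra_irreducible_iff_infinite_conjugates
    {G : Type*} [Group G] [Countable G] (H : Subgroup G)
    (lam : G → (lp (fun _ : G => ℂ) 2 →L[ℂ] lp (fun _ : G => ℂ) 2))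
    (hlam : ∀ (g : G) (f : lp (fun _ : G => ℂ) 2) (x : G),
      (lam g f : ∀ _ : G, ℂ) x = f (g⁻¹ * x)) :
    ({x | x ∈ Set.centralizer (Set.centralizer {T | ∃ g : G, T = lam g}) ∧
        x ∈ Set.centralizer
          (Set.centralizer (Set.centralizer {T | ∃ h ∈ H, T = lam h}))} =
      Set.range fun c : ℂ =>
        c • (1 : lp (fun _ : G => ℂ) 2 →L[ℂ] lp (fun _ : G => ℂ) 2)) ↔
    ∀ g : G, g ≠ 1 → {x : G | ∃ h ∈ H, x = h * g * h⁻¹}.Infinite :=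
  groupVonNeumannAlgebra_irreducible_iff_infinite_conjugates_general H lam hlam
end

section
/- Let G = F∞ ⋊_α ℤ, where F∞ is the free group on generators {g_i : i ∈ ℤ}, α is the ℤ-action generated by the shift automorphism φ(g_i) = g_{i+1}, and let H_n ⊆ F∞ ⊆ G be the subgroup generated by {g_i : i ≥ n}. Then the normalizer of H_n in G equals H_n. -/
/-!
Conjugation by `(w, k)` sends `Hₙ` to `w H_{n+k} w⁻¹`, so `(w, k)` normalizes `Hₙ` exactly when
`w H_{n+k} w⁻¹ = Hₙ`. Pick a generator `g_a` with `a ≥ n + k` not occurring in `w`: the word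
`w g_a w⁻¹` is then reduced as written and lies in `Hₙ`, so every letter of `w` has index `≥ n`,
i.e. `w ∈ Hₙ`. Hence `H_{n+k} = Hₙ`, which forces `k = 0`.
-/

open Subgroup

namespace FreeGroup

variable {α : Type*}

theorem mem_invRev {L : List (α × Bool)} {p : α × Bool} :
    p ∈ invRev L ↔ (p.1, !p.2) ∈ L := by
  obtain ⟨a, b⟩ := p
  simp [invRev]

theorem mk_mem_closure_image_of {S : Set α} :
    ∀ {L : List (α × Bool)}, (∀ p ∈ L, p.1 ∈ S) → mk L ∈ closure (of '' S)
  | [], _ => one_mem _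
  | (a, b) :: L, hL => by
    have ha : of a ∈ closure (of '' S) := subset_closure ⟨a, hL _ List.mem_cons_self, rfl⟩
    have hcons : mk ((a, b) :: L) = mk [(a, b)] * mk L := by rw [mul_mk]; rfl
    rw [hcons]
    refine mul_mem ?_ (mk_mem_closure_image_of fun p hp => hL p (List.mem_cons_of_mem _ hp))
    cases b
    · exact inv_mem ha
    · exact ha

theorem map_closure_image_of {β : Type*} (f : FreeGroup α →* FreeGroup β) (e : α → β)
    (hf : ∀ a, f (of a) = of (e a)) (S : Set α) :
    (closure (of '' S)).map f = closure (of '' (e '' S)) := by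
  rw [MonoidHom.map_closure, Set.image_image, Set.image_image]
  simp only [hf]

variable [DecidableEq α]

theorem mem_closure_image_of_iff {S : Set α} {w : FreeGroup α} :
    w ∈ closure (of '' S) ↔ ∀ p ∈ w.toWord, p.1 ∈ S := by
  refine ⟨fun hw => ?_, fun hw => mk_toWord (x := w) ▸ mk_mem_closure_image_of hw⟩
  induction hw using closure_induction with
  | mem x hx =>
    obtain ⟨a, ha, rfl⟩ := hx
    simpa [toWord_of] using ha
  | one => simp
  | mul x y _ _ hx hy =>
    intro p hp
    rcases List.mem_append.1 ((toWord_mul_sublist x y).mem hp) with h | h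
    exacts [hx p h, hy p h]
  | inv x _ hx =>
    intro p hp
    rw [toWord_inv, mem_invRev] at hp
    exact hx (p.1, !p.2) hp

theorem of_mem_closure_image_of_iff {S : Set α} {a : α} : of a ∈ closure (of '' S) ↔ a ∈ S := by
  simp [mem_closure_image_of_iff]

theorem toWord_mul_of_mul_inv {w : FreeGroup α} {a : α} (ha : ∀ p ∈ w.toWord, p.1 ≠ a) :
    (w * of a * w⁻¹).toWord = w.toWord ++ (a, true) :: invRev w.toWord := by
  have hw : IsReduced (w.toWord ++ [(a, true)]) := by
    refine List.isChain_append.2 ⟨isReduced_toWord, IsReduced.singleton, fun p hp q hq heq => ?_⟩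
    obtain rfl : (a, true) = q := by simpa using hq
    exact (ha p (List.mem_of_mem_getLast? hp) heq).elim
  have hw' : IsReduced ((a, true) :: invRev w.toWord) := by
    refine List.isChain_cons.2 ⟨fun q hq heq => ?_, toWord_inv w ▸ isReduced_toWord⟩
    exact (ha _ (mem_invRev.1 (List.mem_of_mem_head? hq)) heq.symm).elim
  have hred : IsReduced (w.toWord ++ [(a, true)] ++ invRev w.toWord) :=
    hw.append_overlap hw' (List.cons_ne_nil _ _)
  have hmk : w * of a * w⁻¹ = mk (w.toWord ++ (a, true) :: invRev w.toWord) := by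
    conv_lhs => rw [← mk_toWord (x := w)]
    rw [inv_mk, ← List.singleton_append, ← List.append_assoc, ← mul_mk, ← mul_mk]
    rfl
  rw [hmk, toWord_mk, ← List.singleton_append, ← List.append_assoc, hred.reduce_eq]

theorem mem_closure_image_of_of_mul_of_mul_inv_mem {S : Set α} {w : FreeGroup α} {a : α}
    (ha : ∀ p ∈ w.toWord, p.1 ≠ a) (h : w * of a * w⁻¹ ∈ closure (of '' S)) :
    w ∈ closure (of '' S) := by
  rw [mem_closure_image_of_iff, toWord_mul_of_mul_inv ha] at h
  exact mem_closure_image_of_iff.2 fun p hp => h p (List.mem_append_left _ hp)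

theorem mem_closure_image_of_and_eq_of_conj {S T : Set α} (hT : T.Infinite) {w : FreeGroup α}
    (h : ∀ z, z ∈ closure (of '' T) ↔ w * z * w⁻¹ ∈ closure (of '' S)) :
    w ∈ closure (of '' S) ∧ S = T := by
  obtain ⟨a, haT, ha⟩ := hT.exists_notMem_finset (w.toWord.map Prod.fst).toFinset
  have hw : w ∈ closure (of '' S) := by
    refine mem_closure_image_of_of_mul_of_mul_inv_mem (a := a) (fun p hp hpa => ha ?_)
      ((h _).1 (subset_closure ⟨a, haT, rfl⟩))
    rw [← hpa]
    exact List.mem_toFinset.2 (List.mem_map_of_mem hp)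
  refine ⟨hw, Set.ext fun b => ?_⟩
  rw [← of_mem_closure_image_of_iff (S := S), ← of_mem_closure_image_of_iff (S := T), h,
    mul_mem_cancel_right (inv_mem hw), mul_mem_cancel_left hw]

end FreeGroup

namespace SemidirectProduct

variable {N G : Type*} [Group N] [Group G] {φ : G →* MulAut N}

theorem mul_inl_mul_inv (g : N ⋊[φ] G) (n : N) :
    g * inl n * g⁻¹ = inl (g.left * φ g.right n * g.left⁻¹) := by
  ext <;> simp [mul_assoc]

theorem mem_iff_of_mem_normalizer_map_inl {H : Subgroup N} {g : N ⋊[φ] G}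
    (hg : g ∈ normalizer ((H.map inl : Subgroup (N ⋊[φ] G)) : Set (N ⋊[φ] G))) (n : N) :
    n ∈ H ↔ g.left * φ g.right n * g.left⁻¹ ∈ H := by
  rw [← mem_map_iff_mem (inl_injective (φ := φ)), ← mem_map_iff_mem (inl_injective (φ := φ)),
    ← mul_inl_mul_inv]
  exact mem_normalizer_iff.1 hg (inl n)

end SemidirectProduct

open FreeGroup

/-- Let `G = F∞ ⋊ ℤ`, where `ℤ` acts on the free group `F∞` on generators
`{gᵢ : i ∈ ℤ}` by powers of the shift `φ(gᵢ) = g_{i+1}`, and let `Hₙ = ⟨gᵢ : i ≥ n⟩`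
viewed as a subgroup of `G`.  Then the normalizer of `Hₙ` in `G` equals `Hₙ`. -/
theorem normalizer_Hn_in_semidirect_product_eq_Hn
    (β : Multiplicative ℤ →* MulAut (FreeGroup ℤ))
    (hβ : ∀ (n i : ℤ), β (Multiplicative.ofAdd n) (FreeGroup.of i) = FreeGroup.of (i + n))
    (n : ℤ) :
    Subgroup.normalizer (((Subgroup.closure {x : FreeGroup ℤ | ∃ i : ℤ, n ≤ i ∧ x = FreeGroup.of i}).map
        (SemidirectProduct.inl : FreeGroup ℤ →* FreeGroup ℤ ⋊[β] Multiplicative ℤ)) : Set (FreeGroup ℤ ⋊[β] Multiplicative ℤ)) =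
      (Subgroup.closure {x : FreeGroup ℤ | ∃ i : ℤ, n ≤ i ∧ x = FreeGroup.of i}).map
        (SemidirectProduct.inl : FreeGroup ℤ →* FreeGroup ℤ ⋊[β] Multiplicative ℤ) := by
  have hgens : {x : FreeGroup ℤ | ∃ i : ℤ, n ≤ i ∧ x = of i} = of '' Set.Ici n := by
    ext
    simp [eq_comm]
  rw [hgens]
  refine le_antisymm (fun ⟨w, k⟩ hg => ?_) le_normalizer
  have hshift : (closure (of '' Set.Ici n)).map (β k).toMonoidHom =
      closure (of '' Set.Ici (n + k.toAdd)) := by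
    rw [map_closure_image_of _ (· + k.toAdd) (fun i => by simpa using hβ k.toAdd i),
      Set.image_add_const_Ici]
  have hconj (z : FreeGroup ℤ) :
      z ∈ closure (of '' Set.Ici (n + k.toAdd)) ↔ w * z * w⁻¹ ∈ closure (of '' Set.Ici n) := by
    rw [← hshift, mem_map_equiv, SemidirectProduct.mem_iff_of_mem_normalizer_map_inl hg,
      MulEquiv.apply_symm_apply]
  obtain ⟨hw, hIci⟩ := mem_closure_image_of_and_eq_of_conj (Set.Ici_infinite _) hconj
  obtain rfl : k = 1 := by simpa using Set.Ici_inj.1 hIci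
  exact ⟨w, hw, rfl⟩
end

section
/- Let G = F∞ ⋊_β (ℤ ⋊_α ℤ₂), where ℤ₂ acts on ℤ by α_m(n) = (−1)ᵐ n, and ℤ ⋊ ℤ₂ acts on the free group F∞ with generators indexed by ℤ ⋊ ℤ₂ by permuting the generator indices via left translation. Let H ≤ G be the subgroup generated by F∞ and ℤ₂. Then for every g ∈ G \ H, the double coset HgH is a union of exactly two left cosets of H. -/
open scoped Pointwise

section Aux

variable (sgn : Multiplicative (ZMod 2) →* MulAut (Multiplicative ℤ))
variable (β : (Multiplicative ℤ ⋊[sgn] Multiplicative (ZMod 2)) →*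
    MulAut (FreeGroup (Multiplicative ℤ ⋊[sgn] Multiplicative (ZMod 2))))

/-- The subgroup of elements whose `ℤ`-component is trivial. -/
def Ksub : Subgroup (FreeGroup (Multiplicative ℤ ⋊[sgn] Multiplicative (ZMod 2)) ⋊[β]
    (Multiplicative ℤ ⋊[sgn] Multiplicative (ZMod 2))) where
  carrier := {x | x.right.left = 1}
  one_mem' := rfl
  mul_mem' := by
    intro a b ha hb
    simp only [Set.mem_setOf_eq, SemidirectProduct.mul_right, SemidirectProduct.mul_left] at *
    rw [ha, hb, map_one, one_mul]
  inv_mem' := by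
    intro a ha
    simp only [Set.mem_setOf_eq, SemidirectProduct.inv_right, SemidirectProduct.inv_left] at *
    rw [ha, inv_one, map_one]

end Aux

/-- Let `G = F∞ ⋊ (ℤ ⋊ ℤ₂)`, where `ℤ₂` acts on `ℤ` by sign and
`Q = ℤ ⋊ ℤ₂` acts on the free group with generators indexed by `Q` by left translation of
indices.  Let `H = ⟨F∞, ℤ₂⟩ ≤ G`.  Then for every `g ∈ G \ H`, the double coset `HgH` is
a union of exactly two left cosets of `H`. -/
theorem doubleCoset_is_two_left_cosets
    (sgn : Multiplicative (ZMod 2) →* MulAut (Multiplicative ℤ))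
    (hsgn : ∀ (m : ZMod 2) (k : ℤ),
      sgn (Multiplicative.ofAdd m) (Multiplicative.ofAdd k) =
        Multiplicative.ofAdd ((-1 : ℤ) ^ m.val * k))
    (β : (Multiplicative ℤ ⋊[sgn] Multiplicative (ZMod 2)) →*
        MulAut (FreeGroup (Multiplicative ℤ ⋊[sgn] Multiplicative (ZMod 2))))
    (hβ : ∀ s t : Multiplicative ℤ ⋊[sgn] Multiplicative (ZMod 2),
      β s (FreeGroup.of t) = FreeGroup.of (s * t))
    (H : Subgroup (FreeGroup (Multiplicative ℤ ⋊[sgn] Multiplicative (ZMod 2)) ⋊[β]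
        (Multiplicative ℤ ⋊[sgn] Multiplicative (ZMod 2))))
    (hH : H = (SemidirectProduct.inl :
          FreeGroup (Multiplicative ℤ ⋊[sgn] Multiplicative (ZMod 2)) →* _).range ⊔
        ((SemidirectProduct.inr).comp (SemidirectProduct.inr :
          Multiplicative (ZMod 2) →* Multiplicative ℤ ⋊[sgn] Multiplicative (ZMod 2))).range) :
    ∀ g : FreeGroup (Multiplicative ℤ ⋊[sgn] Multiplicative (ZMod 2)) ⋊[β]
        (Multiplicative ℤ ⋊[sgn] Multiplicative (ZMod 2)),
      g ∉ H →
      ∃ a b, a⁻¹ * b ∉ H ∧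
        {x | ∃ h₁ ∈ H, ∃ h₂ ∈ H, x = h₁ * g * h₂} =
          a • (H : Set _) ∪ b • (H : Set _) := by
  -- membership in H is "trivial ℤ-component".
  have hHK : H = Ksub sgn β := by
    rw [hH]
    apply le_antisymm
    · apply sup_le
      · rintro x ⟨f, rfl⟩
        show ((SemidirectProduct.inl f : _ ⋊[β] _).right).left = 1
        rw [SemidirectProduct.right_inl]
        rfl
      · rintro x ⟨e, rfl⟩
        show ((SemidirectProduct.inr (SemidirectProduct.inr e) : _ ⋊[β] _).right).left = 1
        rw [SemidirectProduct.right_inr, SemidirectProduct.left_inr]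
    · intro x hx
      have hx' : x.right.left = 1 := hx
      have h1 : x = SemidirectProduct.inl x.left * SemidirectProduct.inr x.right :=
        (SemidirectProduct.inl_left_mul_inr_right x).symm
      have h2 : x.right = SemidirectProduct.inr x.right.right := by
        conv_lhs => rw [← SemidirectProduct.inl_left_mul_inr_right x.right]
        rw [hx', map_one, one_mul]
      rw [h1, h2]
      exact mul_mem (Subgroup.mem_sup_left ⟨x.left, rfl⟩)
        (Subgroup.mem_sup_right ⟨x.right.right, rfl⟩)
  have hmem : ∀ x : FreeGroup (Multiplicative ℤ ⋊[sgn] Multiplicative (ZMod 2)) ⋊[β]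
      (Multiplicative ℤ ⋊[sgn] Multiplicative (ZMod 2)), x ∈ H ↔ x.right.left = 1 := by
    intro x; rw [hHK]; exact Iff.rfl
  -- left coset criterion
  have hcoset : ∀ a x : FreeGroup (Multiplicative ℤ ⋊[sgn] Multiplicative (ZMod 2)) ⋊[β]
      (Multiplicative ℤ ⋊[sgn] Multiplicative (ZMod 2)),
      a⁻¹ * x ∈ H ↔ a.right.left = x.right.left := by
    intro a x
    rw [hmem]
    simp only [SemidirectProduct.mul_right, SemidirectProduct.mul_left,
      SemidirectProduct.inv_right, SemidirectProduct.inv_left]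
    rw [← map_mul, (sgn a.right.right⁻¹).map_eq_one_iff]
    constructor
    · intro h; exact inv_mul_eq_one.mp h
    · intro h; rw [h, inv_mul_cancel]
  -- sgn action description
  have hflip : ∀ k : Multiplicative ℤ,
      sgn (Multiplicative.ofAdd (1 : ZMod 2)) k = k⁻¹ := by
    intro k
    have := hsgn 1 (Multiplicative.toAdd k)
    rw [ofAdd_toAdd] at this
    rw [this]
    have hv : (1 : ZMod 2).val = 1 := rfl
    rw [hv, pow_one, neg_one_mul, ofAdd_neg, ofAdd_toAdd]
  have hzmod : ∀ e : Multiplicative (ZMod 2),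
      e = Multiplicative.ofAdd (0 : ZMod 2) ∨ e = Multiplicative.ofAdd (1 : ZMod 2) := by
    decide
  have hid : ∀ (e : Multiplicative (ZMod 2)) (k : Multiplicative ℤ),
      sgn e k = k ∨ sgn e k = k⁻¹ := by
    intro e k
    rcases hzmod e with he | he
    · left
      rw [he]
      have := hsgn 0 (Multiplicative.toAdd k)
      rw [ofAdd_toAdd] at this
      rw [this]
      have hv : (0 : ZMod 2).val = 0 := rfl
      rw [hv]
      simp
    · right; rw [he]; exact hflip k
  intro g hg
  have hgn : g.right.left ≠ 1 := fun h => hg ((hmem g).2 h)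
  set σ : FreeGroup (Multiplicative ℤ ⋊[sgn] Multiplicative (ZMod 2)) ⋊[β]
      (Multiplicative ℤ ⋊[sgn] Multiplicative (ZMod 2)) :=
    SemidirectProduct.inr (SemidirectProduct.inr (Multiplicative.ofAdd (1 : ZMod 2))) with hσ
  have hσH : σ ∈ H := by
    rw [hmem, hσ, SemidirectProduct.right_inr, SemidirectProduct.left_inr]
  have hσg : (σ * g).right.left = g.right.left⁻¹ := by
    have h1 : (σ * g).right = σ.right * g.right := SemidirectProduct.mul_right σ g
    rw [h1, hσ, SemidirectProduct.right_inr, SemidirectProduct.mul_left,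
      SemidirectProduct.left_inr, SemidirectProduct.right_inr, one_mul, hflip]
  refine ⟨g, σ * g, ?_, ?_⟩
  · rw [hcoset, hσg]
    intro h
    apply hgn
    have : Multiplicative.toAdd g.right.left = - Multiplicative.toAdd g.right.left := by
      have := congrArg Multiplicative.toAdd h
      simpa using this
    have h0 : Multiplicative.toAdd g.right.left = 0 := by omega
    have := congrArg Multiplicative.ofAdd h0
    simpa using this
  · ext x
    simp only [Set.mem_setOf_eq, Set.mem_union, Set.mem_smul_set_iff_inv_smul_mem,
      smul_eq_mul]
    constructor
    · rintro ⟨h₁, hh₁, h₂, hh₂, rfl⟩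
      have e₁ : h₁.right.left = 1 := (hmem h₁).1 hh₁
      have e₂ : h₂.right.left = 1 := (hmem h₂).1 hh₂
      have hx : (h₁ * g * h₂).right.left = sgn h₁.right.right g.right.left := by
        simp only [SemidirectProduct.mul_right, SemidirectProduct.mul_left]
        rw [e₁, e₂, map_one, mul_one, one_mul]
      rcases hid h₁.right.right g.right.left with h | h
      · left; rw [SetLike.mem_coe, hcoset, hx, h]
      · right; rw [SetLike.mem_coe, hcoset, hσg, hx, h]
    · rintro (h | h)
      · rw [SetLike.mem_coe, hcoset] at h
        refine ⟨1, one_mem H, g⁻¹ * x, ?_, by group⟩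
        rw [show g⁻¹ * x = g⁻¹ * x from rfl]
        rw [hcoset]
        exact h
      · rw [SetLike.mem_coe, hcoset, hσg] at h
        refine ⟨σ, hσH, (σ * g)⁻¹ * x, ?_, by group⟩
        rw [hcoset, hσg]
        exact h
end

section
/- Let G = F∞ ⋊_β (ℤ ⋊_α ℤ₂) and H = ⟨F∞, ℤ₂⟩ as above. Then every element g ∈ G with g ≠ e has infinitely many H-conjugates. -/
/-!
Conjugation by `F∞ ⊆ H` already produces infinitely many conjugates. If `g = w ∈ F∞`, conjugating
by a generator `x_a` whose letter does not occur in `w` gives the reduced word `x_a w x_a⁻¹`, and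
these words are distinct for distinct `a`. Otherwise `g = w q` with `q ≠ e`; conjugating by
`x_e ^ k` shifts the exponent sum of `x_e` in the `F∞`-component by `k`, because `q` moves `x_e`
to `x_q ≠ x_e`, so these conjugates are distinct for distinct `k`.
-/

namespace FreeGroup

variable {α : Type*} [DecidableEq α]

theorem toWord_of_mul_mul_inv_of {w : FreeGroup α} {a : α} (hw : w ≠ 1)
    (ha : a ∉ w.toWord.map Prod.fst) :
    (of a * w * (of a)⁻¹).toWord = (a, true) :: w.toWord ++ [(a, false)] := by
  have hne : w.toWord ≠ [] := mt toWord_eq_nil_iff.mp hw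
  have hfresh : ∀ x ∈ w.toWord, x.1 ≠ a := fun x hx h =>
    ha (List.mem_map.mpr ⟨x, hx, h⟩)
  have hred : IsReduced ((a, true) :: w.toWord ++ [(a, false)]) := by
    rw [IsReduced, List.isChain_append, List.isChain_cons]
    refine ⟨⟨fun y hy h => absurd h.symm (hfresh y (List.mem_of_mem_head? hy)),
      isReduced_toWord⟩, List.isChain_singleton _, fun x hx y hy h => ?_⟩
    rw [List.getLast?_cons, List.getLast?_eq_some_getLast hne, Option.getD_some,
      Option.mem_some_iff] at hx
    rw [List.head?_cons, Option.mem_some_iff] at hy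
    exact absurd (by rw [h, ← hy]) (hfresh x (hx ▸ List.getLast_mem hne))
  rw [← hred.reduce_eq, ← toWord_mk]
  congr 1
  conv_lhs => rw [← mk_toWord (x := w)]
  rw [show of a = mk [(a, true)] from rfl, inv_mk, mul_mk, mul_mk]
  rfl

theorem injOn_of_mul_mul_inv_of {w : FreeGroup α} (hw : w ≠ 1) :
    {a | a ∉ w.toWord.map Prod.fst}.InjOn fun a => of a * w * (of a)⁻¹ := by
  intro a ha b hb hab
  have := congrArg toWord hab
  rw [toWord_of_mul_mul_inv_of hw ha, toWord_of_mul_mul_inv_of hw hb] at this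
  simpa using this

theorem infinite_setOf_conj_of [Infinite α] {w : FreeGroup α} (hw : w ≠ 1) :
    {x | ∃ a, x = of a * w * (of a)⁻¹}.Infinite := by
  refine ((w.toWord.map Prod.fst).finite_toSet.infinite_compl.image
    (injOn_of_mul_mul_inv_of hw)).mono ?_
  rintro _ ⟨a, -, rfl⟩
  exact ⟨a, rfl⟩

end FreeGroup

namespace SemidirectProduct

variable {N G : Type*} [Group N] [Group G] {φ : G →* MulAut N}

theorem left_inl_mul_mul_inv_inl (n : N) (g : N ⋊[φ] G) :
    (inl n * g * (inl n)⁻¹).left = n * g.left * φ g.right n⁻¹ := by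
  simp [← map_inv]

theorem injective_inl_zpow_conj {A : Type*} [CommGroup A] (χ : N →* A) (n : N) (g : N ⋊[φ] G)
    (hn : ¬IsOfFinOrder (χ n / χ (φ g.right n))) :
    Function.Injective fun k : ℤ => inl (n ^ k) * g * (inl (n ^ k))⁻¹ := by
  have hχ : ∀ k : ℤ, χ (inl (n ^ k) * g * (inl (n ^ k))⁻¹ : N ⋊[φ] G).left =
      (χ n / χ (φ g.right n)) ^ k * χ g.left := by
    intro k
    rw [left_inl_mul_mul_inv_inl, map_mul, map_mul, ← zpow_neg, map_zpow, map_zpow, map_zpow,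
      div_zpow, zpow_neg, div_eq_mul_inv, mul_right_comm]
  intro k l hkl
  have := congrArg (χ ∘ left) hkl
  simp only [Function.comp_apply, hχ, mul_left_inj] at this
  exact injective_zpow_iff_not_isOfFinOrder.mpr hn this

end SemidirectProduct

theorem infinitely_many_H_conjugates_general
    (sgn : Multiplicative (ZMod 2) →* MulAut (Multiplicative ℤ))
    (β : (Multiplicative ℤ ⋊[sgn] Multiplicative (ZMod 2)) →*
        MulAut (FreeGroup (Multiplicative ℤ ⋊[sgn] Multiplicative (ZMod 2))))
    (hβ : ∀ s t : Multiplicative ℤ ⋊[sgn] Multiplicative (ZMod 2),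
      β s (FreeGroup.of t) = FreeGroup.of (s * t))
    (H : Subgroup (FreeGroup (Multiplicative ℤ ⋊[sgn] Multiplicative (ZMod 2)) ⋊[β]
        (Multiplicative ℤ ⋊[sgn] Multiplicative (ZMod 2))))
    (hH : H = (SemidirectProduct.inl :
          FreeGroup (Multiplicative ℤ ⋊[sgn] Multiplicative (ZMod 2)) →* _).range ⊔
        ((SemidirectProduct.inr).comp (SemidirectProduct.inr :
          Multiplicative (ZMod 2) →* Multiplicative ℤ ⋊[sgn] Multiplicative (ZMod 2))).range) :
    ∀ g : FreeGroup (Multiplicative ℤ ⋊[sgn] Multiplicative (ZMod 2)) ⋊[β]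
        (Multiplicative ℤ ⋊[sgn] Multiplicative (ZMod 2)),
      g ≠ 1 → {x | ∃ h ∈ H, x = h * g * h⁻¹}.Infinite := by
  classical
  intro g hg
  have hinl : ∀ v, SemidirectProduct.inl v ∈ H := fun v =>
    hH ▸ Subgroup.mem_sup_left ⟨v, rfl⟩
  by_cases hq : g.right = 1
  · have hg_eq : g = SemidirectProduct.inl g.left := by
      rw [← SemidirectProduct.inl_left_mul_inr_right g, hq, map_one, mul_one,
        SemidirectProduct.left_inl]
    have hw : g.left ≠ 1 := fun h => hg (by rw [hg_eq, h, map_one])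
    have : Infinite (Multiplicative ℤ ⋊[sgn] Multiplicative (ZMod 2)) :=
      Infinite.of_injective _ SemidirectProduct.inl_injective
    refine ((FreeGroup.infinite_setOf_conj_of hw).image
      SemidirectProduct.inl_injective.injOn).mono ?_
    rintro _ ⟨_, ⟨a, rfl⟩, rfl⟩
    exact ⟨_, hinl (FreeGroup.of a), by rw [hg_eq]; simp⟩
  · set χ := FreeGroup.lift
      (Pi.mulSingle (1 : Multiplicative ℤ ⋊[sgn] Multiplicative (ZMod 2)) (Multiplicative.ofAdd (1 : ℤ)))
    have hχ : χ (FreeGroup.of 1) / χ (β g.right (FreeGroup.of 1)) = Multiplicative.ofAdd 1 := by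
      rw [hβ, mul_one, FreeGroup.lift_apply_of, FreeGroup.lift_apply_of, Pi.mulSingle_eq_same,
        Pi.mulSingle_eq_of_ne hq, div_one]
    refine Set.infinite_of_injective_forall_mem
      (SemidirectProduct.injective_inl_zpow_conj χ (FreeGroup.of 1) g ?_)
      fun k => ⟨_, hinl _, rfl⟩
    rw [hχ, isOfFinOrder_iff_eq_one]
    decide

/-- With `G = F∞ ⋊ (ℤ ⋊ ℤ₂)` and `H = ⟨F∞, ℤ₂⟩` as in Statement 13,
every `g ∈ G` with `g ≠ e` has infinitely many `H`-conjugates. -/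
theorem infinitely_many_H_conjugates
    (sgn : Multiplicative (ZMod 2) →* MulAut (Multiplicative ℤ))
    (hsgn : ∀ (m : ZMod 2) (k : ℤ),
      sgn (Multiplicative.ofAdd m) (Multiplicative.ofAdd k) =
        Multiplicative.ofAdd ((-1 : ℤ) ^ m.val * k))
    (β : (Multiplicative ℤ ⋊[sgn] Multiplicative (ZMod 2)) →*
        MulAut (FreeGroup (Multiplicative ℤ ⋊[sgn] Multiplicative (ZMod 2))))
    (hβ : ∀ s t : Multiplicative ℤ ⋊[sgn] Multiplicative (ZMod 2),
      β s (FreeGroup.of t) = FreeGroup.of (s * t))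
    (H : Subgroup (FreeGroup (Multiplicative ℤ ⋊[sgn] Multiplicative (ZMod 2)) ⋊[β]
        (Multiplicative ℤ ⋊[sgn] Multiplicative (ZMod 2))))
    (hH : H = (SemidirectProduct.inl :
          FreeGroup (Multiplicative ℤ ⋊[sgn] Multiplicative (ZMod 2)) →* _).range ⊔
        ((SemidirectProduct.inr).comp (SemidirectProduct.inr :
          Multiplicative (ZMod 2) →* Multiplicative ℤ ⋊[sgn] Multiplicative (ZMod 2))).range) :
    ∀ g : FreeGroup (Multiplicative ℤ ⋊[sgn] Multiplicative (ZMod 2)) ⋊[β]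
        (Multiplicative ℤ ⋊[sgn] Multiplicative (ZMod 2)),
      g ≠ 1 → {x | ∃ h ∈ H, x = h * g * h⁻¹}.Infinite :=
  infinitely_many_H_conjugates_general sgn β hβ H hH
end

section
/- For any countable discrete group Q, the semidirect product F_{|Q|} ⋊_β Q, where Q acts on the free group with generators {g_t : t ∈ Q} by β_s(g_t) = g_{st}, is an I.C.C. group: every non-identity element has infinitely many conjugates. -/
/-! If `g = (w, 1)` with `w ≠ 1`, conjugating by `t ∈ Q` translates every letter of the reduced
word of `w` by `t`, so already the first letter tells the conjugates apart. If `g = (w, s)` with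
`s ≠ 1`, conjugating by the generator `g_q` gives `(g_q w g_{sq}⁻¹, s)`, whose exponent sum at
`g_q` exceeds that of any other such conjugate, because `sq ≠ q`. -/

open Function

namespace FreeGroup

variable {α β : Type*}

theorem IsReduced.map {f : α → β} (hf : Injective f) {L : List (α × Bool)} (hL : IsReduced L) :
    IsReduced (L.map fun p => (f p.1, p.2)) :=
  List.isChain_map_of_isChain _ (fun _ _ h heq => h (hf heq)) hL

theorem toWord_map [DecidableEq α] [DecidableEq β] {f : α → β} (hf : Injective f)
    (w : FreeGroup α) : (map f w).toWord = w.toWord.map fun p => (f p.1, p.2) := by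
  conv_lhs => rw [← mk_toWord (x := w), map.mk, toWord_mk]
  exact (isReduced_toWord.map hf).reduce_eq

theorem map_mul_left_injective {G : Type*} [Group G] {w : FreeGroup G} (hw : w ≠ 1) :
    Injective fun t : G => map (t * ·) w := by
  classical
  intro t t' h
  obtain ⟨p, L, hL⟩ : ∃ p L, w.toWord = p :: L :=
    List.exists_cons_of_ne_nil (mt toWord_eq_nil_iff.mp hw)
  have h := congrArg toWord h
  simp only [toWord_map (mul_right_injective _), hL, List.map_cons, List.cons.injEq,
    Prod.mk.injEq] at h
  exact mul_right_cancel h.1.1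

def exponentSum [DecidableEq α] (a : α) : FreeGroup α →* Multiplicative ℤ :=
  lift fun b => .ofAdd (if b = a then 1 else 0)

@[simp]
theorem exponentSum_of [DecidableEq α] (a b : α) :
    exponentSum a (of b) = .ofAdd (if b = a then 1 else 0) :=
  lift_apply_of

theorem of_mul_mul_inv_of_injective {σ : α → α} (hσ : ∀ a, σ a ≠ a) (w : FreeGroup α) :
    Injective fun a => of a * w * (of (σ a))⁻¹ := by
  classical
  intro a a' (h : of a * w * (of (σ a))⁻¹ = of a' * w * (of (σ a'))⁻¹)
  by_contra hne
  have h := congrArg (fun v => (exponentSum a v).toAdd) h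
  simp only [_root_.map_mul, _root_.map_inv, exponentSum_of, toAdd_mul, toAdd_inv, toAdd_ofAdd,
    if_neg (hσ a), if_neg (Ne.symm hne)] at h
  split_ifs at h <;> omega

end FreeGroup

namespace SemidirectProduct

variable {N G : Type*} [Group N] [Group G] {φ : G →* MulAut N}

theorem inr_mul_inl_mul_inr_inv (g : G) (n : N) :
    inr g * inl n * (inr g)⁻¹ = (inl (φ g n) : N ⋊[φ] G) := by
  rw [inl_aut, map_inv]

theorem left_inl_mul_mul_inl_inv (n : N) (x : N ⋊[φ] G) :
    (inl n * x * (inl n)⁻¹).left = n * x.left * φ x.right n⁻¹ := by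
  simp [mul_left, inv_left]

end SemidirectProduct

theorem Set.infinite_setOf_conj_of_injective {G ι : Type*} [Group G] [Infinite ι] {g : G}
    (k : ι → G) (hk : Injective fun i => k i * g * (k i)⁻¹) :
    {x : G | ∃ k, x = k * g * k⁻¹}.Infinite :=
  Set.infinite_of_injective_forall_mem hk fun i => ⟨k i, rfl⟩

section FreeGroupSemidirect

open FreeGroup SemidirectProduct

variable {Q : Type*} [Group Q] {β : Q →* MulAut (FreeGroup Q)}

theorem apply_eq_map_mul_left (hβ : ∀ s t : Q, β s (of t) = of (s * t)) (s : Q)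
    (w : FreeGroup Q) : β s w = map (s * ·) w :=
  DFunLike.congr_fun (ext_hom (f := (β s).toMonoidHom) (g := map (s * ·))
    fun t => by simp [hβ]) w

theorem conj_inr_injective (hβ : ∀ s t : Q, β s (of t) = of (s * t)) {w : FreeGroup Q}
    (hw : w ≠ 1) : Injective fun t => (inr t * inl w * (inr t)⁻¹ : FreeGroup Q ⋊[β] Q) := by
  simp only [inr_mul_inl_mul_inr_inv, apply_eq_map_mul_left hβ]
  exact inl_injective.comp (map_mul_left_injective hw)

theorem conj_inl_of_injective (hβ : ∀ s t : Q, β s (of t) = of (s * t))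
    {g : FreeGroup Q ⋊[β] Q} (hg : g.right ≠ 1) :
    Injective fun q => inl (of q) * g * (inl (of q))⁻¹ := by
  refine Injective.of_comp (f := left) ?_
  simp only [comp_def, left_inl_mul_mul_inl_inv, _root_.map_inv, hβ]
  exact of_mul_mul_inv_of_injective (fun q h => hg (mul_eq_right.mp h)) _

end FreeGroupSemidirect

theorem semidirect_product_with_free_group_is_ICC_general
    {Q : Type*} [Group Q] [Infinite Q]
    (β : Q →* MulAut (FreeGroup Q))
    (hβ : ∀ s t : Q, β s (FreeGroup.of t) = FreeGroup.of (s * t)) :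
    ∀ g : FreeGroup Q ⋊[β] Q, g ≠ 1 →
      {x : FreeGroup Q ⋊[β] Q | ∃ k, x = k * g * k⁻¹}.Infinite := by
  intro g hg
  by_cases hs : g.right = 1
  · have hw : g.left ≠ 1 := fun hw => hg (SemidirectProduct.ext hw hs)
    rw [← SemidirectProduct.inl_left_mul_inr_right g, hs, map_one, mul_one]
    exact Set.infinite_setOf_conj_of_injective _ (conj_inr_injective hβ hw)
  · exact Set.infinite_setOf_conj_of_injective _ (conj_inl_of_injective hβ hs)

/-- For any countably infinite discrete group `Q`, the semidirect product
`F_{|Q|} ⋊ Q`, where `Q` acts on the free group with generators `{g_t : t ∈ Q}` by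
`β_s(g_t) = g_{st}`, is an I.C.C. group: every non-identity element has infinitely many
conjugates. -/
theorem semidirect_product_with_free_group_is_ICC
    {Q : Type*} [Group Q] [Countable Q] [Infinite Q]
    (β : Q →* MulAut (FreeGroup Q))
    (hβ : ∀ s t : Q, β s (FreeGroup.of t) = FreeGroup.of (s * t)) :
    ∀ g : FreeGroup Q ⋊[β] Q, g ≠ 1 →
      {x : FreeGroup Q ⋊[β] Q | ∃ k, x = k * g * k⁻¹}.Infinite :=
  semidirect_product_with_free_group_is_ICC_general β hβ
end
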